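/- arXiv:2106.10860 — 2 statements merged into one kernel-verified Lean document; each statement's English description precedes it below -/
import Mathlib

section
/- Fix p ≥ 0 and let U = 2^p. For a vector x of U nonnegative integers, define the recursive pairwise-averaging value r(x) by: r(x) = x₁ if U = 1, and otherwise r(x) = ⌊(r(x_left) + r(x_right) + 1)/2⌋, where x_left and x_right are the first and last U/2 entries of x. Then for every such x, 0 ≤ U·r(x) − Σᵢ xᵢ ≤ (U/2)·log₂(U) = p·2^(p−1); i.e., the averaging-based sum estimator U·r(x) never underestimates the true sum and overestimates it by at most U·log₂(U)/2. -/
/-- The recursive pairwise-averaging value of a vector of `2 ^ p` natural numbers: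
a single entry is returned as-is, and otherwise the values of the two halves are
combined with the rounding-up integer average `⌊(a + b + 1) / 2⌋`. -/
def pairwiseAvg : (p : ℕ) → (Fin (2 ^ p) → ℕ) → ℕ
  | 0, x => x ⟨0, by norm_num⟩
  | p + 1, x =>
      (pairwiseAvg p (fun i => x ⟨i.val, by have := i.isLt; rw [pow_succ]; omega⟩) +
        pairwiseAvg p (fun i => x ⟨2 ^ p + i.val, by have := i.isLt; rw [pow_succ]; omega⟩) +
        1) / 2

/-- **Deterministic error bound for the recursive averaging sum estimator.**
For a vector `x` of `U = 2 ^ p` nonnegative integers, the estimator `U · r(x)` built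
from repeated rounding-up pairwise averages never underestimates the true sum `∑ i, x i`
and overestimates it by at most `(U / 2) · log₂ U = p · 2 ^ (p - 1)`. -/
theorem pairwiseAvg_sum_error_bounds (p : ℕ) (x : Fin (2 ^ p) → ℕ) :
    (0 ≤ (2 ^ p : ℤ) * pairwiseAvg p x - ∑ i, (x i : ℤ)) ∧
    ((2 ^ p : ℤ) * pairwiseAvg p x - ∑ i, (x i : ℤ) ≤ (p : ℤ) * 2 ^ (p - 1)) := by
  induction p with
  | zero =>
      simp [pairwiseAvg, Fin.sum_univ_succ]
  | succ p ih =>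
      set xl : Fin (2 ^ p) → ℕ :=
        fun i => x ⟨i.val, by have := i.isLt; rw [pow_succ]; omega⟩ with hxl
      set xr : Fin (2 ^ p) → ℕ :=
        fun i => x ⟨2 ^ p + i.val, by have := i.isLt; rw [pow_succ]; omega⟩ with hxr
      obtain ⟨hL1, hL2⟩ := ih xl
      obtain ⟨hR1, hR2⟩ := ih xr
      have h : 2 ^ p + 2 ^ p = 2 ^ (p + 1) := by rw [pow_succ]; omega
      have hsplit : (∑ i, (x i : ℤ)) = (∑ i, (xl i : ℤ)) + ∑ i, (xr i : ℤ) := by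
        calc ∑ i, (x i : ℤ)
            = ∑ i : Fin (2 ^ p + 2 ^ p), (x (Fin.cast h i) : ℤ) :=
              (Fintype.sum_equiv (finCongr h) _ _ (fun i => rfl)).symm
          _ = (∑ i : Fin (2 ^ p), (x (Fin.cast h (Fin.castAdd (2 ^ p) i)) : ℤ)) +
              ∑ i : Fin (2 ^ p), (x (Fin.cast h (Fin.natAdd (2 ^ p) i)) : ℤ) :=
              Fin.sum_univ_add _
          _ = (∑ i, (xl i : ℤ)) + ∑ i, (xr i : ℤ) := by
              congr 1 <;> refine Finset.sum_congr rfl fun i _ => ?_ <;>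
                · congr 1
      have hdef : pairwiseAvg (p + 1) x = (pairwiseAvg p xl + pairwiseAvg p xr + 1) / 2 := rfl
      set a := pairwiseAvg p xl
      set b := pairwiseAvg p xr
      have hq : a + b ≤ 2 * ((a + b + 1) / 2) ∧ 2 * ((a + b + 1) / 2) ≤ a + b + 1 := by omega
      have hqz : (a : ℤ) + b ≤ 2 * (((a + b + 1) / 2 : ℕ) : ℤ) ∧
          2 * (((a + b + 1) / 2 : ℕ) : ℤ) ≤ a + b + 1 := by exact_mod_cast hq
      have hpow : (0 : ℤ) < 2 ^ p := by positivity
      have hhalf : (p : ℤ) * 2 ^ (p - 1) * 2 ≤ (p : ℤ) * 2 ^ p := by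
        cases p with
        | zero => simp
        | succ n =>
            have hn : n + 1 - 1 = n := rfl
            exact le_of_eq (by rw [hn, pow_succ]; push_cast; ring)
      rw [hdef, hsplit]
      have hpow2 : (2 : ℤ) ^ (p + 1) = 2 * 2 ^ p := by rw [pow_succ]; ring
      constructor
      · rw [hpow2]
        nlinarith [hqz.1]
      · rw [hpow2]
        have hs : ((p + 1 : ℕ) : ℤ) * 2 ^ (p + 1 - 1) = (p : ℤ) * 2 ^ p + 2 ^ p := by
          push_cast; ring
        rw [hs]
        nlinarith [hqz.2]
end

section
/- Let X be a real N×D matrix, Y a real N×M matrix, and λ > 0, and let W = (XᵀX + λI)⁻¹ Xᵀ Y be the ridge regression weight matrix. Then the largest singular value of W is at most the largest singular value of Y divided by 2√λ, i.e., ‖W‖ ≤ ‖Y‖/(2√λ) in the L2 operator norm. -/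
/-!
If `w = (TᵀT + λ)⁻¹ Tᵀ v`, pairing the normal equation `TᵀT w + λ w = Tᵀ v` with `w` gives
`‖T w‖² + λ ‖w‖² = ⟪T w, v⟫ ≤ ‖T w‖ ‖v‖`, while AM-GM gives
`2 √λ ‖T w‖ ‖w‖ ≤ ‖T w‖² + λ ‖w‖²`. Hence `‖w‖ ≤ ‖v‖ / (2 √λ)`, i.e. `(TᵀT + λ)⁻¹ Tᵀ` has
operator norm at most `1 / (2 √λ)`, and submultiplicativity finishes the proof.
-/

open scoped Matrix.Norms.L2Operator

lemma le_div_two_mul_sqrt_of_sq_add_mul_sq_le {a b c lam : ℝ} (ha : 0 ≤ a) (hc : 0 ≤ c)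
    (hlam : 0 < lam) (h : a ^ 2 + lam * b ^ 2 ≤ a * c) : b ≤ c / (2 * √lam) := by
  have hs : 0 < √lam := Real.sqrt_pos.mpr hlam
  rw [← Real.sq_sqrt hlam.le] at h
  rcases ha.eq_or_lt with rfl | ha
  · have hb : b ^ 2 = 0 := by nlinarith [sq_nonneg b, sq_pos_of_pos hs]
    rw [pow_eq_zero_iff two_ne_zero |>.mp hb]
    positivity
  · rw [le_div_iff₀ (by positivity)]
    nlinarith [two_mul_le_add_sq a (√lam * b)]

section InnerProductSpace

variable {E F : Type*} [NormedAddCommGroup E] [InnerProductSpace ℝ E] [FiniteDimensional ℝ E]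
  [NormedAddCommGroup F] [InnerProductSpace ℝ F] [FiniteDimensional ℝ F]

open LinearMap in
theorem norm_le_of_adjoint_apply_add_smul_eq (T : E →ₗ[ℝ] F) {lam : ℝ} (hlam : 0 < lam)
    {v : F} {w : E} (h : adjoint T (T w) + lam • w = adjoint T v) :
    ‖w‖ ≤ ‖v‖ / (2 * √lam) := by
  have energy : ‖T w‖ ^ 2 + lam * ‖w‖ ^ 2 = inner ℝ (T w) v := by
    have := congrArg (inner ℝ w) h
    rwa [inner_add_right, inner_smul_right, adjoint_inner_right, adjoint_inner_right,
      real_inner_self_eq_norm_sq, real_inner_self_eq_norm_sq] at this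
  exact le_div_two_mul_sqrt_of_sq_add_mul_sq_le (norm_nonneg _) (norm_nonneg v) hlam
    (energy.trans_le (real_inner_le_norm _ _))

end InnerProductSpace

namespace Matrix

variable {m n : Type*} [Fintype m] [Fintype n] [DecidableEq n]

theorem posDef_transpose_mul_self_add_smul_one (X : Matrix m n ℝ) {lam : ℝ} (hlam : 0 < lam) :
    (Xᵀ * X + lam • (1 : Matrix n n ℝ)).PosDef :=
  PosDef.posSemidef_add (posSemidef_conjTranspose_mul_self X) (PosDef.one.smul hlam)

theorem l2_opNorm_ridge_le [DecidableEq m] (X : Matrix m n ℝ) {lam : ℝ} (hlam : 0 < lam) :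
    ‖(Xᵀ * X + lam • (1 : Matrix n n ℝ))⁻¹ * Xᵀ‖ ≤ (2 * √lam)⁻¹ := by
  set A := Xᵀ * X + lam • (1 : Matrix n n ℝ)
  have hA : A * A⁻¹ = 1 :=
    mul_nonsing_inv A (posDef_transpose_mul_self_add_smul_one X hlam).det_pos.ne'.isUnit
  have hT : LinearMap.adjoint (toEuclideanLin X) = toEuclideanLin Xᵀ := by
    rw [← toEuclideanLin_conjTranspose_eq_adjoint, conjTranspose_eq_transpose_of_trivial]
  rw [l2_opNorm_def]
  refine ContinuousLinearMap.opNorm_le_bound _ (by positivity) fun v => ?_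
  set w := toEuclideanLin (A⁻¹ * Xᵀ) v
  have normal_eq : toEuclideanLin Xᵀ (toEuclideanLin X w) + lam • w = toEuclideanLin Xᵀ v := by
    calc _ = toEuclideanLin A w := by simp [A]
      _ = toEuclideanLin Xᵀ v := by
        rw [← LinearMap.comp_apply, ← toLpLin_mul_same, ← Matrix.mul_assoc, hA, Matrix.one_mul]
  rw [← hT] at normal_eq
  exact (norm_le_of_adjoint_apply_add_smul_eq _ hlam normal_eq).trans_eq (div_eq_inv_mul _ _)

end Matrix

open Matrix in
/-- **Ridge regression singular value bound.**
For real matrices `X : N × D` and `Y : N × M` and any `λ > 0`, the ridge regression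
weight matrix `W = (Xᵀ X + λ I)⁻¹ Xᵀ Y` satisfies `‖W‖ ≤ ‖Y‖ / (2 √λ)`, where `‖·‖`
denotes the `L2` operator norm (the largest singular value). -/
theorem ridge_regression_opNorm_bound
    {N D M : ℕ} (X : Matrix (Fin N) (Fin D) ℝ) (Y : Matrix (Fin N) (Fin M) ℝ)
    (lam : ℝ) (hlam : 0 < lam) :
    ‖(Xᵀ * X + lam • (1 : Matrix (Fin D) (Fin D) ℝ))⁻¹ * Xᵀ * Y‖ ≤
      ‖Y‖ / (2 * Real.sqrt lam) := by
  calc ‖(Xᵀ * X + lam • (1 : Matrix (Fin D) (Fin D) ℝ))⁻¹ * Xᵀ * Y‖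
      ≤ ‖(Xᵀ * X + lam • (1 : Matrix (Fin D) (Fin D) ℝ))⁻¹ * Xᵀ‖ * ‖Y‖ := l2_opNorm_mul _ _
    _ ≤ (2 * √lam)⁻¹ * ‖Y‖ := by gcongr; exact l2_opNorm_ridge_le X hlam
    _ = ‖Y‖ / (2 * √lam) := inv_mul_eq_div _ _
end
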